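/- arXiv:2309.10194 — 4 statements merged into one kernel-verified Lean document; each statement's English description precedes it below -/
import Mathlib

section
/- Let N ≥ 2 and let X_1, …, X_N be real samples with minimum X_(1) strictly less than maximum X_(N). For every x ∈ ℝ, the kernel density integral transform converges to min-max scaling as the bandwidth grows: lim_{h→∞} F̂^KDI_N(x; h) = Ŝ_N(x). -/
open MeasureTheory Filter

/-- The Gaussian kernel `K(z) = exp(-z²/2)/√(2π)`. -/
noncomputable def gaussKernel (z : ℝ) : ℝ := Real.exp (-z ^ 2 / 2) / Real.sqrt (2 * Real.pi)

/-- The Gaussian kernel density estimator with bandwidth `h` for samples `X`. -/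
noncomputable def kde (N : ℕ) (X : Fin N → ℝ) (h x : ℝ) : ℝ :=
  (1 / (N * h)) * ∑ n, gaussKernel ((x - X n) / h)

/-- `P_h(a,b) = ∫_a^b f̂_h(t) dt`. -/
noncomputable def kdeMass (N : ℕ) (X : Fin N → ℝ) (h a b : ℝ) : ℝ :=
  ∫ t in a..b, kde N X h t

/-- The kernel density integral transform, where `a` is the sample minimum and `b`
the sample maximum. -/
noncomputable def kdi (N : ℕ) (X : Fin N → ℝ) (a b h x : ℝ) : ℝ :=
  if x < a then 0
  else if x < b then kdeMass N X h a x / kdeMass N X h a b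
  else 1

/-- Min-max scaling, where `a` is the sample minimum and `b` the sample maximum. -/
noncomputable def minmax (a b x : ℝ) : ℝ :=
  if x ≤ a then 0
  else if x ≤ b then (x - a) / (b - a)
  else 1

/-! Multiplied by `h`, the mass `P_h(a, y)` is the sample average of `∫_a^y K((t - X_n)/h) dt`,
which tends to `(y - a) K(0)` since the rescaled kernel flattens to the constant `K(0)` on
bounded intervals. The factor `h` cancels in the ratio defining the transform. -/

open Topology

theorem tendsto_intervalIntegral_comp_div_atTop {K : ℝ → ℝ} (hK : Continuous K) (a y c : ℝ) :
    Tendsto (fun h => ∫ t in a..y, K ((t - c) / h)) atTop (𝓝 ((y - a) * K 0)) := by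
  have hcont : Continuous fun s : ℝ => ∫ t in a..y, K ((t - c) * s) :=
    intervalIntegral.continuous_parametric_intervalIntegral_of_continuous' (by fun_prop) a y
  have hlim := (hcont.tendsto 0).comp tendsto_inv_atTop_zero
  simpa [Function.comp_def, div_eq_mul_inv, mul_comm] using hlim

theorem continuous_gaussKernel : Continuous gaussKernel := by
  unfold gaussKernel
  fun_prop

theorem gaussKernel_zero_pos : 0 < gaussKernel 0 := by
  unfold gaussKernel
  positivity

theorem mul_kdeMass_eq {N : ℕ} (X : Fin N → ℝ) {h : ℝ} (hh : h ≠ 0) (a y : ℝ) :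
    h * kdeMass N X h a y = (N : ℝ)⁻¹ * ∑ n, ∫ t in a..y, gaussKernel ((t - X n) / h) := by
  have hint : ∀ n ∈ Finset.univ,
      IntervalIntegrable (fun t => gaussKernel ((t - X n) / h)) volume a y := fun n _ =>
    (continuous_gaussKernel.comp (by fun_prop)).intervalIntegrable a y
  rw [kdeMass, ← intervalIntegral.integral_finsetSum hint, ← intervalIntegral.integral_const_mul,
    ← intervalIntegral.integral_const_mul]
  congr 1 with t
  rw [kde]
  field_simp

theorem tendsto_mul_kdeMass_atTop {N : ℕ} (hN : N ≠ 0) (X : Fin N → ℝ) (a y : ℝ) :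
    Tendsto (fun h => h * kdeMass N X h a y) atTop (𝓝 ((y - a) * gaussKernel 0)) := by
  have hsum := tendsto_finsetSum Finset.univ fun n _ =>
    tendsto_intervalIntegral_comp_div_atTop continuous_gaussKernel a y (X n)
  have hlim := hsum.const_mul (N : ℝ)⁻¹
  rw [Finset.sum_const, Finset.card_univ, Fintype.card_fin, nsmul_eq_mul, ← mul_assoc,
    inv_mul_cancel₀ (Nat.cast_ne_zero.mpr hN), one_mul] at hlim
  refine hlim.congr' ?_
  filter_upwards [eventually_ne_atTop 0] with h hh
  exact (mul_kdeMass_eq X hh a y).symm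

theorem kdi_of_lt_left (N : ℕ) (X : Fin N → ℝ) {a b x : ℝ} (h : ℝ) (hxa : x < a) :
    kdi N X a b h x = 0 :=
  if_pos hxa

theorem kdi_of_le_of_lt (N : ℕ) (X : Fin N → ℝ) {a b x : ℝ} (h : ℝ) (hax : a ≤ x) (hxb : x < b) :
    kdi N X a b h x = kdeMass N X h a x / kdeMass N X h a b := by
  rw [kdi, if_neg hax.not_gt, if_pos hxb]

theorem kdi_of_le_right (N : ℕ) (X : Fin N → ℝ) {a b x : ℝ} (h : ℝ) (hax : a ≤ x) (hbx : b ≤ x) :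
    kdi N X a b h x = 1 := by
  rw [kdi, if_neg hax.not_gt, if_neg hbx.not_gt]

theorem minmax_of_le_left {a b x : ℝ} (hxa : x ≤ a) : minmax a b x = 0 :=
  if_pos hxa

theorem minmax_of_le_of_le {a b x : ℝ} (hax : a ≤ x) (hxb : x ≤ b) :
    minmax a b x = (x - a) / (b - a) := by
  rcases hax.eq_or_lt with rfl | hax
  · simp [minmax]
  · rw [minmax, if_neg hax.not_ge, if_pos hxb]

theorem minmax_of_le_right {a b x : ℝ} (hab : a < b) (hbx : b ≤ x) : minmax a b x = 1 := by
  rcases hbx.eq_or_lt with rfl | hbx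
  · rw [minmax_of_le_of_le hab.le le_rfl, div_self (sub_pos.mpr hab).ne']
  · rw [minmax, if_neg (hab.trans hbx).not_ge, if_neg hbx.not_ge]

theorem kdi_tendsto_minmax_atTop_general (N : ℕ) (hN : 2 ≤ N) (X : Fin N → ℝ) (a b : ℝ)
    (hab : a < b) (x : ℝ) :
    Tendsto (fun h => kdi N X a b h x) atTop (nhds (minmax a b x)) := by
  rcases lt_or_ge x a with hxa | hax
  · simp only [kdi_of_lt_left N X _ hxa, minmax_of_le_left hxa.le, tendsto_const_nhds]
  rcases le_or_gt b x with hbx | hxb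
  · simp only [kdi_of_le_right N X _ hax hbx, minmax_of_le_right hab hbx, tendsto_const_nhds]
  have hN0 : N ≠ 0 := by omega
  have hden : (b - a) * gaussKernel 0 ≠ 0 := (mul_pos (sub_pos.mpr hab) gaussKernel_zero_pos).ne'
  have hratio := (tendsto_mul_kdeMass_atTop hN0 X a x).div (tendsto_mul_kdeMass_atTop hN0 X a b) hden
  rw [mul_div_mul_right _ _ gaussKernel_zero_pos.ne', ← minmax_of_le_of_le hax hxb.le] at hratio
  refine hratio.congr' ?_
  filter_upwards [eventually_ne_atTop 0] with h hh
  rw [Pi.div_apply, kdi_of_le_of_lt N X h hax hxb, mul_div_mul_left _ _ hh]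

/-- As the bandwidth `h → ∞`, the kernel density integral transform converges
pointwise to min-max scaling. -/
theorem kdi_tendsto_minmax_atTop (N : ℕ) (hN : 2 ≤ N) (X : Fin N → ℝ) (a b : ℝ)
    (ha : ∃ n, X n = a) (hb : ∃ n, X n = b) (hbd : ∀ n, a ≤ X n ∧ X n ≤ b)
    (hab : a < b) (x : ℝ) :
    Tendsto (fun h => kdi N X a b h x) atTop (nhds (minmax a b x)) :=
  kdi_tendsto_minmax_atTop_general N hN X a b hab x
end

section
/- Let X_1, …, X_N be real samples and let x ∈ ℝ with x ≠ X_n for all n. Then the Gaussian KDE c.d.f. converges to the empirical c.d.f. at x as the bandwidth vanishes: lim_{h→0⁺} ∫_{−∞}^x f̂_h(t) dt = F̂_N(x). -/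
open MeasureTheory Filter

/-!
Substituting `z = (t - Xₙ)/h` turns the KDE c.d.f. at `x` into `(1/N) Σₙ Φ((x - Xₙ)/h)`, where
`Φ(y) = ∫_{-∞}^y K` is the kernel's c.d.f. As `h → 0⁺` the argument `(x - Xₙ)/h` tends to `+∞`
or `-∞` according to the sign of `x - Xₙ`, so `Φ` tends to `∫ K = 1` or to `0`.
-/

open Set Topology

section KernelCDF

variable {E : Type*} [NormedAddCommGroup E] [NormedSpace ℝ E]

theorem integral_Iic_comp_sub_div (g : ℝ → E) (c x : ℝ) {h : ℝ} (hh : 0 < h) :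
    ∫ t in Iic x, g ((t - c) / h) = h • ∫ z in Iic ((x - c) / h), g z := by
  have hmem : ∀ t, (t - c) / h ∈ Iic ((x - c) / h) ↔ t ∈ Iic x := fun t => by
    simp only [mem_Iic, div_le_div_iff_of_pos_right hh, sub_le_sub_iff_right]
  have hind : (Iic x).indicator (fun t => g ((t - c) / h))
      = fun t => (Iic ((x - c) / h)).indicator g ((t - c) / h) := by
    ext t
    simp only [indicator_apply, hmem]
  calc ∫ t in Iic x, g ((t - c) / h)
      = ∫ t, (Iic ((x - c) / h)).indicator g ((t - c) / h) := by
        rw [← integral_indicator measurableSet_Iic, hind]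
    _ = ∫ u, (Iic ((x - c) / h)).indicator g (u / h) :=
        integral_sub_right_eq_self (fun u => (Iic ((x - c) / h)).indicator g (u / h)) c
    _ = |h| • ∫ z, (Iic ((x - c) / h)).indicator g z := Measure.integral_comp_div _ h
    _ = h • ∫ z in Iic ((x - c) / h), g z := by
        rw [integral_indicator measurableSet_Iic, abs_of_pos hh]

theorem tendsto_integral_Iic_atTop {g : ℝ → E} (hg : Integrable g) :
    Tendsto (fun y => ∫ z in Iic y, g z) atTop (𝓝 (∫ z, g z)) :=
  (aecover_Iic tendsto_id).integral_tendsto_of_countably_generated hg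

theorem tendsto_integral_Iic_sub_div_nhdsGT {g : ℝ → E} (hg : Integrable g) {c x : ℝ}
    (hcx : c ≠ x) :
    Tendsto (fun h => ∫ z in Iic ((x - c) / h), g z) (𝓝[>] 0)
      (𝓝 (if c ≤ x then ∫ z, g z else 0)) := by
  rcases hcx.lt_or_gt with hlt | hgt
  · rw [if_pos hlt.le]
    refine (tendsto_integral_Iic_atTop hg).comp ?_
    exact (tendsto_inv_nhdsGT_zero.const_mul_atTop (sub_pos.mpr hlt)).congr fun h =>
      (div_eq_mul_inv _ _).symm
  · rw [if_neg hgt.not_ge]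
    refine tendsto_integral_Iic_zero ?_
    exact ((tendsto_const_mul_atBot_of_neg (sub_neg.mpr hgt)).mpr tendsto_inv_nhdsGT_zero).congr
      fun h => (div_eq_mul_inv _ _).symm

end KernelCDF

section KernelDensityEstimate

noncomputable def kernelDensityEstimate (K : ℝ → ℝ) (N : ℕ) (X : Fin N → ℝ) (h x : ℝ) : ℝ :=
  (1 / (N * h)) * ∑ n, K ((x - X n) / h)

variable {K : ℝ → ℝ} (N : ℕ) (X : Fin N → ℝ)

theorem kde_eq_kernelDensityEstimate : kde N X = kernelDensityEstimate gaussKernel N X := rfl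

theorem integral_Iic_kernelDensityEstimate (hK : Integrable K) (x : ℝ) {h : ℝ} (hh : 0 < h) :
    ∫ t in Iic x, kernelDensityEstimate K N X h t
      = (1 / N) * ∑ n, ∫ z in Iic ((x - X n) / h), K z := by
  have hint : ∀ n, Integrable (fun t => K ((t - X n) / h)) :=
    fun n => (hK.comp_div hh.ne').comp_sub_right (X n)
  simp only [kernelDensityEstimate]
  rw [integral_const_mul, integral_finsetSum _ fun n _ => (hint n).integrableOn]
  simp only [integral_Iic_comp_sub_div K _ x hh, smul_eq_mul, ← Finset.mul_sum]
  field_simp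

theorem tendsto_integral_Iic_kernelDensityEstimate (hK : Integrable K) {x : ℝ}
    (hx : ∀ n, x ≠ X n) :
    Tendsto (fun h => ∫ t in Iic x, kernelDensityEstimate K N X h t) (𝓝[>] 0)
      (𝓝 ((1 / N) * ∑ n, if X n ≤ x then ∫ z, K z else 0)) := by
  refine Tendsto.congr' (eventually_nhdsWithin_of_forall fun h hh =>
    (integral_Iic_kernelDensityEstimate N X hK x hh).symm) ?_
  exact (tendsto_finsetSum _ fun n _ =>
    tendsto_integral_Iic_sub_div_nhdsGT hK (hx n).symm).const_mul _

end KernelDensityEstimate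

theorem gaussKernel_eq_gaussianPDFReal :
    gaussKernel = ProbabilityTheory.gaussianPDFReal 0 1 := by
  ext z
  simp [gaussKernel, ProbabilityTheory.gaussianPDFReal, div_eq_inv_mul]

theorem kde_cdf_tendsto_ecdf_general (N : ℕ) (X : Fin N → ℝ)
    (x : ℝ) (hx : ∀ n, x ≠ X n) :
    Tendsto (fun h => ∫ t in Set.Iic x, kde N X h t)
      (nhdsWithin 0 (Set.Ioi 0))
      (nhds ((1 / N) * ∑ n, if X n ≤ x then (1 : ℝ) else 0)) := by
  have hK := ProbabilityTheory.integrable_gaussianPDFReal 0 1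
  have hmass := ProbabilityTheory.integral_gaussianPDFReal_eq_one 0 one_ne_zero
  rw [← gaussKernel_eq_gaussianPDFReal] at hK hmass
  simpa only [kde_eq_kernelDensityEstimate, hmass] using
    tendsto_integral_Iic_kernelDensityEstimate N X hK hx

/-- At any point `x` that is not a sample point, the Gaussian KDE c.d.f. converges to
the empirical c.d.f. `F̂_N(x) = (1/N) Σ_n 1{X_n ≤ x}` as the bandwidth `h → 0⁺`. -/
theorem kde_cdf_tendsto_ecdf (N : ℕ) (hN : 1 ≤ N) (X : Fin N → ℝ)
    (x : ℝ) (hx : ∀ n, x ≠ X n) :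
    Tendsto (fun h => ∫ t in Set.Iic x, kde N X h t)
      (nhdsWithin 0 (Set.Ioi 0))
      (nhds ((1 / N) * ∑ n, if X n ≤ x then (1 : ℝ) else 0)) :=
  kde_cdf_tendsto_ecdf_general N X x hx
end

section
/- Let N ≥ 2 and let X_1, …, X_N be pairwise distinct real samples with order statistics X_(1) < X_(2) < … < X_(N). Then for every index 1 ≤ r ≤ N, the small-bandwidth limit of the KD-integral transform evaluated at the r-th order statistic is lim_{h→0⁺} F̂^KDI_N(X_(r); h) = (r − 1)/(N − 1). -/
open MeasureTheory Filter

/-!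
After the substitution `u = (t - X n) / h`, the mass `P_h(a, b)` is the average over the samples
of `∫ K` over `[(a - X n)/h, (b - X n)/h]`. As `h → 0⁺` an endpoint `c / h` escapes to `±∞`
or stays at `0` according to the sign of `c`, and `K` is even with total mass one, so
`∫_0^{c/h} K → sign c / 2`. For strictly increasing samples this gives
`P_h(X_(i), X_(j)) → (j - i) / N`; below `X_(N)` the transform is a quotient of two such
masses, and at `X_(N)` it is `1` by definition.
-/

open Topology

theorem intervalIntegral_comp_sub_div (K : ℝ → ℝ) {h : ℝ} (hh : h ≠ 0) (a b x : ℝ) :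
    ∫ t in a..b, K ((t - x) / h) = h * ∫ u in (a - x) / h..(b - x) / h, K u := by
  rw [intervalIntegral.integral_comp_sub_right (fun t => K (t / h)),
    intervalIntegral.integral_comp_div K hh, smul_eq_mul]

section KernelScaling

variable {K : ℝ → ℝ}

theorem tendsto_const_div_nhdsGT_zero_atTop {c : ℝ} (hc : 0 < c) :
    Tendsto (fun h : ℝ => c / h) (𝓝[>] 0) atTop := by
  simpa only [div_eq_mul_inv] using tendsto_inv_nhdsGT_zero.const_mul_atTop hc

theorem tendsto_const_div_nhdsGT_zero_atBot {c : ℝ} (hc : c < 0) :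
    Tendsto (fun h : ℝ => c / h) (𝓝[>] 0) atBot := by
  simpa only [div_eq_mul_inv] using tendsto_inv_nhdsGT_zero.const_mul_atTop_of_neg hc

theorem tendsto_intervalIntegral_zero_div_of_pos (hK : IntegrableOn K (Set.Ioi 0)) {c : ℝ}
    (hc : 0 < c) :
    Tendsto (fun h => ∫ u in 0..c / h, K u) (𝓝[>] 0) (𝓝 (∫ u in Set.Ioi 0, K u)) :=
  intervalIntegral_tendsto_integral_Ioi 0 hK (tendsto_const_div_nhdsGT_zero_atTop hc)

theorem tendsto_intervalIntegral_zero_div_of_neg (hK : IntegrableOn K (Set.Iic 0)) {c : ℝ}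
    (hc : c < 0) :
    Tendsto (fun h => ∫ u in 0..c / h, K u) (𝓝[>] 0) (𝓝 (-∫ u in Set.Iic 0, K u)) :=
  (intervalIntegral_tendsto_integral_Iic 0 hK (tendsto_const_div_nhdsGT_zero_atBot hc)).neg.congr
    fun h => (intervalIntegral.integral_symm (c / h) 0).symm

end KernelScaling

theorem gaussKernel_eq_exp_neg_mul_sq (z : ℝ) :
    gaussKernel z = Real.exp (-(1 / 2) * z ^ 2) / Real.sqrt (2 * Real.pi) := by
  rw [gaussKernel]
  ring_nf

theorem integrable_gaussKernel : Integrable gaussKernel := by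
  rw [show gaussKernel = _ from funext gaussKernel_eq_exp_neg_mul_sq]
  exact (integrable_exp_neg_mul_sq (by norm_num)).div_const _

theorem integral_gaussKernel : ∫ u, gaussKernel u = 1 := by
  simp_rw [gaussKernel_eq_exp_neg_mul_sq]
  rw [integral_div, integral_gaussian, show Real.pi / (1 / 2) = 2 * Real.pi by ring]
  exact div_self (Real.sqrt_pos.2 (by positivity)).ne'

theorem integral_gaussKernel_Ioi : ∫ u in Set.Ioi 0, gaussKernel u = 1 / 2 := by
  simp_rw [gaussKernel_eq_exp_neg_mul_sq]
  rw [integral_div, integral_gaussian_Ioi, show Real.pi / (1 / 2) = 2 * Real.pi by ring,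
    div_right_comm, div_self (Real.sqrt_pos.2 (by positivity)).ne']

theorem integral_gaussKernel_Iic : ∫ u in Set.Iic 0, gaussKernel u = 1 / 2 := by
  have hsplit := intervalIntegral.integral_Iic_add_Ioi (b := 0)
    integrable_gaussKernel.integrableOn integrable_gaussKernel.integrableOn
  rw [integral_gaussKernel, integral_gaussKernel_Ioi] at hsplit
  linarith

theorem tendsto_integral_gaussKernel_zero_div (c : ℝ) :
    Tendsto (fun h => ∫ u in 0..c / h, gaussKernel u) (𝓝[>] 0) (𝓝 (Real.sign c / 2)) := by
  rcases lt_trichotomy c 0 with hc | rfl | hc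
  · rw [Real.sign_of_neg hc, show (-1 : ℝ) / 2 = -(1 / 2) by ring, ← integral_gaussKernel_Iic]
    exact tendsto_intervalIntegral_zero_div_of_neg integrable_gaussKernel.integrableOn hc
  · simp only [zero_div, intervalIntegral.integral_same, Real.sign_zero]
    exact tendsto_const_nhds
  · rw [Real.sign_of_pos hc, ← integral_gaussKernel_Ioi]
    exact tendsto_intervalIntegral_zero_div_of_pos integrable_gaussKernel.integrableOn hc

theorem tendsto_integral_gaussKernel_div_sub (a b x : ℝ) :
    Tendsto (fun h => ∫ u in (a - x) / h..(b - x) / h, gaussKernel u) (𝓝[>] 0)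
      (𝓝 ((Real.sign (b - x) - Real.sign (a - x)) / 2)) := by
  have hsplit (h : ℝ) : ∫ u in (a - x) / h..(b - x) / h, gaussKernel u =
      (∫ u in 0..(b - x) / h, gaussKernel u) - ∫ u in 0..(a - x) / h, gaussKernel u :=
    (intervalIntegral.integral_interval_sub_left integrable_gaussKernel.intervalIntegrable
      integrable_gaussKernel.intervalIntegrable).symm
  rw [sub_div]
  exact ((tendsto_integral_gaussKernel_zero_div _).sub
    (tendsto_integral_gaussKernel_zero_div _)).congr fun h => (hsplit h).symm

theorem sign_sub_eq_of_strictMono {α : Type*} [LinearOrder α] {f g : α → ℝ}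
    (hf : StrictMono f) (hg : StrictMono g) (a b : α) :
    Real.sign (f a - f b) = Real.sign (g a - g b) := by
  rcases lt_trichotomy a b with hab | rfl | hab
  · rw [Real.sign_of_neg (sub_neg.2 (hf hab)), Real.sign_of_neg (sub_neg.2 (hg hab))]
  · simp
  · rw [Real.sign_of_pos (sub_pos.2 (hf hab)), Real.sign_of_pos (sub_pos.2 (hg hab))]

theorem sum_range_sign_sub {i : ℕ} : ∀ {N : ℕ}, i < N →
    ∑ n ∈ Finset.range N, Real.sign ((i : ℝ) - n) = 2 * i + 1 - N
  | 0, hi => absurd hi (Nat.not_lt_zero i)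
  | N + 1, hi => by
    rw [Finset.sum_range_succ]
    rcases (Nat.lt_succ_iff.1 hi).lt_or_eq with hiN | rfl
    · rw [sum_range_sign_sub hiN, Real.sign_of_neg (by simpa using hiN)]
      push_cast
      ring
    · rw [Finset.sum_congr rfl fun n hn => Real.sign_of_pos <| sub_pos.2 <|
        Nat.cast_lt.2 (Finset.mem_range.1 hn)]
      simp only [Finset.sum_const, Finset.card_range, nsmul_eq_mul, mul_one, sub_self,
        Real.sign_zero, add_zero]
      push_cast
      ring

theorem sum_sign_sub_of_strictMono {N : ℕ} {X : Fin N → ℝ} (hX : StrictMono X) (i : Fin N) :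
    ∑ n, Real.sign (X i - X n) = 2 * i + 1 - N := by
  have hval : StrictMono fun n : Fin N => (n : ℝ) :=
    fun _ _ h => Nat.cast_lt.2 (Fin.val_strictMono h)
  simp_rw [sign_sub_eq_of_strictMono hX hval i]
  rw [Fin.sum_univ_eq_sum_range (fun n => Real.sign ((i : ℝ) - n))]
  exact sum_range_sign_sub i.isLt

section KdeMass

variable {N : ℕ}

theorem kdeMass_eq_sum (X : Fin N → ℝ) {h : ℝ} (hh : h ≠ 0) (a b : ℝ) :
    kdeMass N X h a b = (∑ n, ∫ u in (a - X n) / h..(b - X n) / h, gaussKernel u) / N := by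
  have hint (n : Fin N) :
      IntervalIntegrable (fun t => gaussKernel ((t - X n) / h)) MeasureTheory.volume a b :=
    (continuous_gaussKernel.comp (by fun_prop)).intervalIntegrable a b
  unfold kdeMass kde
  rw [intervalIntegral.integral_const_mul, intervalIntegral.integral_finsetSum fun n _ => hint n]
  simp_rw [intervalIntegral_comp_sub_div _ hh, ← Finset.mul_sum]
  field_simp

theorem tendsto_kdeMass (X : Fin N → ℝ) (a b : ℝ) :
    Tendsto (fun h => kdeMass N X h a b) (𝓝[>] 0)
      (𝓝 ((∑ n, (Real.sign (b - X n) - Real.sign (a - X n)) / 2) / N)) := by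
  refine Tendsto.congr' ?_ ((tendsto_finsetSum _ fun n _ =>
    tendsto_integral_gaussKernel_div_sub a b (X n)).div_const _)
  filter_upwards [self_mem_nhdsWithin] with h hh
  exact (kdeMass_eq_sum X (ne_of_gt hh) a b).symm

theorem tendsto_kdeMass_of_strictMono {X : Fin N → ℝ} (hX : StrictMono X) (i j : Fin N) :
    Tendsto (fun h => kdeMass N X h (X i) (X j)) (𝓝[>] 0) (𝓝 (((j : ℝ) - i) / N)) := by
  convert tendsto_kdeMass X (X i) (X j) using 3
  rw [← Finset.sum_div, Finset.sum_sub_distrib, sum_sign_sub_of_strictMono hX,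
    sum_sign_sub_of_strictMono hX]
  ring

end KdeMass

/-- For pairwise distinct samples `X_(1) < … < X_(N)` (here `X` is strictly monotone,
so `X ⟨i⟩` is the `(i+1)`-th order statistic), for every `1 ≤ r ≤ N`, the
small-bandwidth limit of the KD-integral transform evaluated at the `r`-th order
statistic is `(r - 1)/(N - 1)`. -/
theorem kdi_tendsto_at_order_stat (N : ℕ) (hN : 2 ≤ N) (X : Fin N → ℝ)
    (hX : StrictMono X) (r : ℕ) (hr1 : 1 ≤ r) (hr2 : r ≤ N) :
    Tendsto (fun h => kdi N X (X ⟨0, by omega⟩) (X ⟨N - 1, by omega⟩) h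
        (X ⟨r - 1, by omega⟩))
      (nhdsWithin 0 (Set.Ioi 0))
      (nhds (((r : ℝ) - 1) / ((N : ℝ) - 1))) := by
  have h2N : (2 : ℝ) ≤ N := by exact_mod_cast hN
  have hN0 : (N : ℝ) ≠ 0 := by positivity
  have hN1 : (N : ℝ) - 1 ≠ 0 := by linarith
  have h_not_lt_min : ¬ X ⟨r - 1, by omega⟩ < X ⟨0, by omega⟩ :=
    not_lt.2 (hX.monotone (Fin.mk_le_mk.2 (Nat.zero_le _)))
  rcases hr2.eq_or_lt with rfl | hrN
  · simp only [kdi, if_neg h_not_lt_min, lt_irrefl, if_false, div_self hN1]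
    exact tendsto_const_nhds
  · have h_lt_max : X ⟨r - 1, by omega⟩ < X ⟨N - 1, by omega⟩ := hX (Fin.mk_lt_mk.2 (by omega))
    simp only [kdi, if_neg h_not_lt_min, if_pos h_lt_max]
    have hlim := (tendsto_kdeMass_of_strictMono hX ⟨0, by omega⟩ ⟨r - 1, by omega⟩).div
      (tendsto_kdeMass_of_strictMono hX ⟨0, by omega⟩ ⟨N - 1, by omega⟩)
      (by simpa [Nat.cast_sub (by omega : 1 ≤ N)] using ⟨hN1, by omega⟩)
    convert hlim using 2
    · rfl
    · simp only [Nat.cast_zero, sub_zero, Nat.cast_sub hr1,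
        Nat.cast_sub (by omega : 1 ≤ N), Nat.cast_one]
      field_simp
end

section
/- The order-4 polynomial-exponential kernel with coefficients β_i proportional to 1/i!, namely f(x) = (Σ_{i=0}^{4} |x|^i / i!) · e^{−|x|}, is four times continuously differentiable on ℝ (it is of class C⁴, including at x = 0). -/
/-!
Write the kernel as `g (|x|)` with `g t = (∑_{i ≤ 4} tⁱ / i!) e^{-t}`. Differentiating the
truncated exponential series gives the series truncated one step earlier, so
`g' t = -(t⁴ / 4!) e^{-t}`: the first derivative of the kernel already carries the factor `x³ |x|`.
Away from `0` each successive derivative is again a polynomial in `x` and `|x|` times `e^{-|x|}`,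
and these expressions are continuous on all of `ℝ`. A function continuous at a point whose
derivative off that point extends continuously across it is differentiable there as well, so
each derivative raises the smoothness by one.
-/

open Real Finset
open scoped Nat

theorem hasDerivAt_sum_range_pow_div_factorial (n : ℕ) (t : ℝ) :
    HasDerivAt (fun t => ∑ i ∈ range (n + 1), t ^ i / (i ! : ℝ))
      (∑ i ∈ range n, t ^ i / (i ! : ℝ)) t := by
  induction n with
  | zero => simpa using hasDerivAt_const t (1 : ℝ)
  | succ n ih =>
    simp_rw [sum_range_succ _ (n + 1)]
    refine (ih.add ((hasDerivAt_pow (n + 1) t).div_const ((n + 1)! : ℝ))).congr_deriv ?_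
    rw [sum_range_succ, Nat.factorial_succ]
    push_cast
    field_simp

theorem hasDerivAt_sum_range_pow_div_factorial_mul_exp_neg (n : ℕ) (t : ℝ) :
    HasDerivAt (fun t => (∑ i ∈ range (n + 1), t ^ i / (i ! : ℝ)) * exp (-t))
      (-(t ^ n / n !) * exp (-t)) t := by
  refine ((hasDerivAt_sum_range_pow_div_factorial n t).mul (hasDerivAt_neg t).exp).congr_deriv ?_
  rw [sum_range_succ]
  ring

theorem hasDerivAt_exp_neg_abs {x : ℝ} (hx : x ≠ 0) :
    HasDerivAt (fun y => exp (-|y|)) (-SignType.sign x * exp (-|x|)) x := by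
  have h : HasDerivAt (fun y => -|y|) (-SignType.sign x : ℝ) x := (hasDerivAt_abs hx).neg
  simpa only [mul_comm] using h.exp

theorem contDiff_succ_of_hasDerivAt_of_ne {E : Type*} [NormedAddCommGroup E] [NormedSpace ℝ E]
    {f g : ℝ → E} {a : ℝ} {n : ℕ} (hf : ContinuousAt f a) (hfg : ∀ y ≠ a, HasDerivAt f (g y) y)
    (hg : ContDiff ℝ n g) : ContDiff ℝ (n + 1) f := by
  have hfg' := hasDerivAt_of_hasDerivAt_of_ne' hfg hf hg.continuous.continuousAt
  have hderiv : deriv f = g := funext fun x => (hfg' x).deriv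
  exact contDiff_succ_iff_deriv.2 ⟨fun x => (hfg' x).differentiableAt, by simp, hderiv ▸ hg⟩

namespace PolyExpKernel

noncomputable def kernel (x : ℝ) : ℝ :=
  (∑ i ∈ range 5, |x| ^ i / (i ! : ℝ)) * exp (-|x|)

noncomputable def d1 (x : ℝ) : ℝ := -(x ^ 3 * |x|) / 24 * exp (-|x|)

noncomputable def d2 (x : ℝ) : ℝ := (x ^ 4 - 4 * x ^ 2 * |x|) / 24 * exp (-|x|)

noncomputable def d3 (x : ℝ) : ℝ := (8 * x ^ 3 - 12 * x * |x| - x ^ 3 * |x|) / 24 * exp (-|x|)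

noncomputable def d4 (x : ℝ) : ℝ :=
  (x ^ 4 - 12 * x ^ 2 * |x| + 36 * x ^ 2 - 24 * |x|) / 24 * exp (-|x|)

variable {x : ℝ}

theorem hasDerivAt_kernel (hx : x ≠ 0) : HasDerivAt kernel (d1 x) x := by
  refine ((hasDerivAt_sum_range_pow_div_factorial_mul_exp_neg 4 |x|).comp x
    (hasDerivAt_abs hx)).congr_deriv ?_
  rcases hx.lt_or_gt with h | h <;>
    simp only [d1, h, abs_of_neg, abs_of_pos, _root_.sign_neg, sign_pos, SignType.coe_neg,
      SignType.coe_one, Nat.factorial] <;>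
    ring

theorem hasDerivAt_d1 (hx : x ≠ 0) : HasDerivAt d1 (d2 x) x := by
  refine ((((hasDerivAt_pow 3 x).mul (hasDerivAt_abs hx)).neg.div_const 24).mul
    (hasDerivAt_exp_neg_abs hx)).congr_deriv ?_
  rcases hx.lt_or_gt with h | h <;>
    simp only [d2, h, abs_of_neg, abs_of_pos, _root_.sign_neg, sign_pos, SignType.coe_neg,
      SignType.coe_one, Pi.mul_apply, Pi.neg_apply] <;>
    ring

theorem hasDerivAt_d2 (hx : x ≠ 0) : HasDerivAt d2 (d3 x) x := by
  refine ((((hasDerivAt_pow 4 x).sub (((hasDerivAt_pow 2 x).const_mul 4).mul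
    (hasDerivAt_abs hx))).div_const 24).mul (hasDerivAt_exp_neg_abs hx)).congr_deriv ?_
  rcases hx.lt_or_gt with h | h <;>
    simp only [d3, h, abs_of_neg, abs_of_pos, _root_.sign_neg, sign_pos, SignType.coe_neg,
      SignType.coe_one, Pi.mul_apply, Pi.sub_apply] <;>
    ring

theorem hasDerivAt_d3 (hx : x ≠ 0) : HasDerivAt d3 (d4 x) x := by
  refine ((((((hasDerivAt_pow 3 x).const_mul 8).sub (((hasDerivAt_id x).const_mul 12).mul
    (hasDerivAt_abs hx))).sub ((hasDerivAt_pow 3 x).mul (hasDerivAt_abs hx))).div_const 24).mul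
    (hasDerivAt_exp_neg_abs hx)).congr_deriv ?_
  rcases hx.lt_or_gt with h | h <;>
    simp only [d4, h, abs_of_neg, abs_of_pos, _root_.sign_neg, sign_pos, SignType.coe_neg,
      SignType.coe_one, Pi.mul_apply, Pi.sub_apply, id_eq] <;>
    ring

end PolyExpKernel

/-- The order-4 polynomial-exponential kernel
`f(x) = (Σ_{i=0}^4 |x|^i / i!) · e^{-|x|}` is of class `C⁴` on `ℝ`. -/
theorem polyExpKernel_contDiff_four :
    ContDiff ℝ 4 (fun x : ℝ =>
      (∑ i ∈ Finset.range 5, |x| ^ i / (Nat.factorial i : ℝ)) * Real.exp (-|x|)) := by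
  open PolyExpKernel in
  have h4 : ContDiff ℝ (0 : ℕ) d4 := contDiff_zero.2 (by unfold d4; fun_prop)
  have h3 := contDiff_succ_of_hasDerivAt_of_ne (by unfold d3; fun_prop) (fun _ => hasDerivAt_d3) h4
  have h2 := contDiff_succ_of_hasDerivAt_of_ne (by unfold d2; fun_prop) (fun _ => hasDerivAt_d2) h3
  have h1 := contDiff_succ_of_hasDerivAt_of_ne (by unfold d1; fun_prop) (fun _ => hasDerivAt_d1) h2
  exact contDiff_succ_of_hasDerivAt_of_ne (f := kernel) (by unfold kernel; fun_prop)
    (fun _ => hasDerivAt_kernel) h1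
end
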